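/- Let M be an irreducible unitary projective co-representation of G with factor system ω satisfying ω(e,e) = 1, whose restriction to H is unitarily equivalent to a direct sum of two mutually inequivalent irreducible projective representations of H (the type-III, complex case, norm R = 2). Then there exists an irreducible projective representation D of H (of dimension m, with factor system ω restricted to H×H) such that M is equivalent to the co-representation U in standard form: U(h) = diag(D(h), conj(E(h))) for all h ∈ H, and U(T0) = [[0, ω(T0,T0)·D(T0²)],[I_m, 0]] in m×m block form, where E(h) := conj( ω(h,T0) / ω(T0, T0^{−1}·h·T0) )·D(T0^{−1}·h·T0) and conj denotes (entrywise) complex conjugation. -/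

import Mathlib

/-!
Conjugate `M` so that on `H` it is `diag(D₁, D₂)` and write `N(T₀) = [[A, B], [C, D]]`. The
co-representation law `N(h) N(T₀) = λ(h) N(T₀) conj N(T₀⁻¹hT₀)` says that `A` and `C` intertwine
`D₁`, resp. `D₂`, with the conjugate partner `conj E` of `D₁`, so by Schur each of them is zero or
invertible. If `A` were invertible, then either `C = 0`, unitarity of `N(T₀)` forces `B = 0` and
the first summand is invariant, or `C A⁻¹` is an invertible intertwiner from `D₁` to `D₂`, which
Schur upgrades to a unitary equivalence. Hence `A = 0`, so `C` is unitary and `D = 0`;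
conjugating by `diag(1, C⁻¹)` gives the standard form, and `U(T₀) conj U(T₀) = ω(T₀,T₀) U(T₀²)`
identifies its upper right block.
-/

open Matrix Complex BigOperators

noncomputable section

def mconj {ι : Type*} (u : ℤˣ) (X : Matrix ι ι ℂ) : Matrix ι ι ℂ :=
  if u = 1 then X else X.map (starRingEnd ℂ)

def vconj {ι : Type*} (u : ℤˣ) (v : ι → ℂ) : ι → ℂ :=
  if u = 1 then v else star v

structure IsCoRep {G : Type*} [Group G] {ι : Type*} [Fintype ι] [DecidableEq ι] (s : G →* ℤˣ)
    (M : G → Matrix ι ι ℂ) (ω : G → G → ℂ) : Prop where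
  isUnit : ∀ g, IsUnit (M g)
  omega_norm : ∀ g1 g2, ‖ω g1 g2‖ = 1
  mul_eq : ∀ g1 g2, M g1 * mconj (s g1) (M g2) = ω g1 g2 • M (g1 * g2)

structure IsUnitaryCoRep {G : Type*} [Group G] {ι : Type*} [Fintype ι] [DecidableEq ι]
    (s : G →* ℤˣ) (M : G → Matrix ι ι ℂ) (ω : G → G → ℂ) extends IsCoRep s M ω : Prop where
  unitary : ∀ g, M g ∈ Matrix.unitaryGroup ι ℂ

def rho {G : Type*} [Group G] {ι : Type*} [Fintype ι] (s : G →* ℤˣ) (M : G → Matrix ι ι ℂ)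
    (g : G) (v : ι → ℂ) : ι → ℂ :=
  (M g).mulVec (vconj (s g) v)

def InvariantSub {G : Type*} [Group G] {ι : Type*} [Fintype ι] (s : G →* ℤˣ)
    (M : G → Matrix ι ι ℂ) (W : Submodule ℂ (ι → ℂ)) : Prop :=
  ∀ g : G, ∀ v ∈ W, rho s M g v ∈ W

def IrreducibleCoRep {G : Type*} [Group G] {ι : Type*} [Fintype ι] (s : G →* ℤˣ)
    (M : G → Matrix ι ι ℂ) : Prop :=
  ∀ W : Submodule ℂ (ι → ℂ), InvariantSub s M W → W = ⊥ ∨ W = ⊤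

def IsProjRepOnH {G : Type*} [Group G] {ι : Type*} [Fintype ι] [DecidableEq ι] (s : G →* ℤˣ)
    (D : G → Matrix ι ι ℂ) (ω : G → G → ℂ) : Prop :=
  (∀ h, s h = 1 → D h ∈ Matrix.unitaryGroup ι ℂ) ∧
  ∀ h1 h2, s h1 = 1 → s h2 = 1 → D h1 * D h2 = ω h1 h2 • D (h1 * h2)

def IrreducibleOnH {G : Type*} [Group G] {ι : Type*} [Fintype ι] (s : G →* ℤˣ)
    (D : G → Matrix ι ι ℂ) : Prop :=
  ∀ W : Submodule ℂ (ι → ℂ), (∀ h, s h = 1 → ∀ v ∈ W, (D h).mulVec v ∈ W) →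
    W = ⊥ ∨ W = ⊤

def UnitEquivOnH {G : Type*} [Group G] {ι : Type*} [Fintype ι] [DecidableEq ι] (s : G →* ℤˣ)
    (D1 D2 : G → Matrix ι ι ℂ) : Prop :=
  ∃ U ∈ Matrix.unitaryGroup ι ℂ, ∀ h, s h = 1 → D2 h = U * D1 h * star U

def CoRepEquiv {G : Type*} [Group G] {α β : Type*} [Fintype α] [DecidableEq α]
    [Fintype β] [DecidableEq β] (s : G →* ℤˣ)
    (M1 : G → Matrix α α ℂ) (M2 : G → Matrix β β ℂ) : Prop :=
  ∃ (e : α ≃ β) (S : Matrix β β ℂ), S ∈ Matrix.unitaryGroup β ℂ ∧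
    ∀ g, M2 g = S * (M1 g).submatrix e.symm e.symm * (mconj (s g) S)⁻¹

/-- The conjugate partner `E(h) = conj(ω(h,T0)/ω(T0,T0⁻¹hT0))·D(T0⁻¹hT0)` of a
projective representation `D` of `H`. -/
def Estd {G : Type*} [Group G] {ι : Type*} (ω : G → G → ℂ) (T0 : G)
    (D : G → Matrix ι ι ℂ) (h : G) : Matrix ι ι ℂ :=
  (starRingEnd ℂ) (ω h T0 / ω T0 (T0⁻¹ * h * T0)) • D (T0⁻¹ * h * T0)

open scoped ComplexOrder

section Conjugation

variable {ι κ : Type*}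

@[simp] lemma mconj_one (X : Matrix ι ι ℂ) : mconj 1 X = X := if_pos rfl

lemma mconj_neg_one (X : Matrix ι ι ℂ) : mconj (-1) X = X.map (starRingEnd ℂ) :=
  if_neg (by decide)

lemma mconj_mul [Fintype ι] (u : ℤˣ) (X Y : Matrix ι ι ℂ) :
    mconj u (X * Y) = mconj u X * mconj u Y := by
  unfold mconj; split
  · rfl
  · exact Matrix.map_mul

lemma mconj_matrix_one [DecidableEq ι] (u : ℤˣ) : mconj u (1 : Matrix ι ι ℂ) = 1 := by
  unfold mconj; split
  · rfl
  · exact Matrix.map_one _ (map_zero _) (map_one _)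

lemma mconj_mconj (u v : ℤˣ) (X : Matrix ι ι ℂ) : mconj u (mconj v X) = mconj (u * v) X := by
  rcases Int.units_eq_one_or u with rfl | rfl <;> rcases Int.units_eq_one_or v with rfl | rfl <;>
    ext <;> simp [mconj_neg_one]

lemma mconj_star (u : ℤˣ) (X : Matrix ι ι ℂ) : mconj u (star X) = star (mconj u X) := by
  rcases Int.units_eq_one_or u with rfl | rfl
  · rfl
  · ext; simp [mconj_neg_one]

lemma mconj_submatrix (u : ℤˣ) (X : Matrix ι ι ℂ) (e : κ → ι) :
    mconj u (X.submatrix e e) = (mconj u X).submatrix e e := by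
  unfold mconj; split <;> rfl

lemma mconj_mem_unitaryGroup [Fintype ι] [DecidableEq ι] (u : ℤˣ) {X : Matrix ι ι ℂ}
    (hX : X ∈ unitaryGroup ι ℂ) : mconj u X ∈ unitaryGroup ι ℂ := by
  rw [mem_unitaryGroup_iff] at hX ⊢
  rw [← mconj_star, ← mconj_mul, hX, mconj_matrix_one]

lemma star_mconj_mul_self [Fintype ι] [DecidableEq ι] (u : ℤˣ) {X : Matrix ι ι ℂ}
    (hX : X ∈ unitaryGroup ι ℂ) : star (mconj u X) * mconj u X = 1 :=
  mem_unitaryGroup_iff'.mp (mconj_mem_unitaryGroup u hX)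

lemma vconj_vconj (u v : ℤˣ) (x : ι → ℂ) : vconj u (vconj v x) = vconj (u * v) x := by
  rcases Int.units_eq_one_or u with rfl | rfl <;> rcases Int.units_eq_one_or v with rfl | rfl <;>
    simp [vconj]

lemma vconj_comp (u : ℤˣ) (x : ι → ℂ) (f : κ → ι) : vconj u (x ∘ f) = vconj u x ∘ f := by
  unfold vconj; split <;> rfl

lemma vconj_mulVec [Fintype ι] (u : ℤˣ) (X : Matrix ι ι ℂ) (x : ι → ℂ) :
    vconj u (X *ᵥ x) = mconj u X *ᵥ vconj u x := by
  rcases Int.units_eq_one_or u with rfl | rfl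
  · rfl
  · ext; simp [vconj, mconj_neg_one, mulVec, dotProduct]

end Conjugation

section CoRep

variable {G : Type*} [Group G] {s : G →* ℤˣ} {ω : G → G → ℂ}
  {ι : Type*} [Fintype ι] {M : G → Matrix ι ι ℂ}

section
variable [DecidableEq ι]

lemma IsCoRep.omega_ne_zero (hM : IsCoRep s M ω) (g1 g2 : G) : ω g1 g2 ≠ 0 := by
  intro h
  simpa [h] using hM.omega_norm g1 g2

lemma IsCoRep.rho_mul (hM : IsCoRep s M ω) (g1 g2 : G) (v : ι → ℂ) :
    rho s M g1 (rho s M g2 v) = ω g1 g2 • rho s M (g1 * g2) v := by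
  simp only [rho, vconj_mulVec, mulVec_mulVec, vconj_vconj, ← map_mul, hM.mul_eq, smul_mulVec]

lemma IsUnitaryCoRep.of_unitary (hnorm : ∀ g1 g2, ‖ω g1 g2‖ = 1)
    (hmul : ∀ g1 g2, M g1 * mconj (s g1) (M g2) = ω g1 g2 • M (g1 * g2))
    (hunit : ∀ g, M g ∈ unitaryGroup ι ℂ) : IsUnitaryCoRep s M ω :=
  ⟨⟨fun g => Unitary.isUnit_coe (U := ⟨M g, hunit g⟩), hnorm, hmul⟩, hunit⟩

end

-- For unitary `S`, `star (mconj (s g) S)` is the inverse appearing in `CoRepEquiv`.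
def unitaryConj (s : G →* ℤˣ) (S : Matrix ι ι ℂ) (M : G → Matrix ι ι ℂ) (g : G) :
    Matrix ι ι ℂ :=
  S * M g * star (mconj (s g) S)

lemma unitaryConj_mul (V S : Matrix ι ι ℂ) :
    unitaryConj s (V * S) M = unitaryConj s V (unitaryConj s S M) := by
  funext g
  simp only [unitaryConj, mconj_mul, star_mul, mul_assoc]

lemma unitaryConj_of_eq_one (S : Matrix ι ι ℂ) {h : G} (hh : s h = 1) :
    unitaryConj s S M h = S * M h * star S := by
  rw [unitaryConj, hh, mconj_one]

lemma IsUnitaryCoRep.unitaryConj [DecidableEq ι] (hM : IsUnitaryCoRep s M ω) {S : Matrix ι ι ℂ}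
    (hS : S ∈ unitaryGroup ι ℂ) : IsUnitaryCoRep s (_root_.unitaryConj s S M) ω := by
  refine .of_unitary hM.omega_norm (fun g1 g2 => ?_) fun g =>
    mul_mem (mul_mem hS (hM.unitary g)) (Unitary.star_mem (mconj_mem_unitaryGroup _ hS))
  have hconj : mconj (s g1) (_root_.unitaryConj s S M g2)
      = mconj (s g1) S * mconj (s g1) (M g2) * star (mconj (s (g1 * g2)) S) := by
    rw [_root_.unitaryConj, mconj_mul, mconj_mul, mconj_star, mconj_mconj, map_mul]
  rw [hconj, _root_.unitaryConj, _root_.unitaryConj]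
  calc S * M g1 * star (mconj (s g1) S) *
        (mconj (s g1) S * mconj (s g1) (M g2) * star (mconj (s (g1 * g2)) S))
      = S * (M g1 * (star (mconj (s g1) S) * mconj (s g1) S) * mconj (s g1) (M g2)) *
          star (mconj (s (g1 * g2)) S) := by noncomm_ring
    _ = ω g1 g2 • (S * M (g1 * g2) * star (mconj (s (g1 * g2)) S)) := by
      rw [star_mconj_mul_self _ hS, mul_one, hM.mul_eq, Matrix.mul_smul, Matrix.smul_mul]

end CoRep

section Transport

variable {G : Type*} [Group G] {s : G →* ℤˣ} {ω : G → G → ℂ}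
  {α β : Type*} [Fintype α] [Fintype β]

lemma unitaryConj_submatrix_of_eq_one {M : G → Matrix α α ℂ} (S : Matrix α α ℂ) (e : β ≃ α)
    {h : G} (hh : s h = 1) :
    unitaryConj s (S.submatrix e e) (fun g => (M g).submatrix e e) h
      = (S * M h * star S).submatrix e e := by
  rw [unitaryConj_of_eq_one _ hh, star_eq_conjTranspose, conjTranspose_submatrix,
    submatrix_mul_equiv, submatrix_mul_equiv, star_eq_conjTranspose]

lemma IrreducibleCoRep.of_surjective {M : G → Matrix α α ℂ} {M' : G → Matrix β β ℂ}
    (hirr : IrreducibleCoRep s M) (L : (α → ℂ) →ₗ[ℂ] (β → ℂ)) (hL : Function.Surjective L)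
    (hcomm : ∀ g v, L (rho s M g v) = rho s M' g (L v)) : IrreducibleCoRep s M' := by
  intro W hW
  have hinv : InvariantSub s M (W.comap L) := fun g v hv => by
    simpa only [Submodule.mem_comap, hcomm] using hW g _ hv
  rw [← Submodule.map_comap_eq_of_surjective hL W]
  rcases hirr _ hinv with h | h
  · left
    rw [h, Submodule.map_bot]
  · right
    rw [h, Submodule.map_top, LinearMap.range_eq_top.mpr hL]

lemma IrreducibleCoRep.submatrix {M : G → Matrix α α ℂ} (hirr : IrreducibleCoRep s M)
    (e : β ≃ α) : IrreducibleCoRep s (fun g => (M g).submatrix e e) :=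
  hirr.of_surjective (LinearMap.funLeft ℂ ℂ e)
    (LinearMap.funLeft_surjective_of_injective _ _ _ e.injective) fun g v => by
      change (M g *ᵥ vconj (s g) v) ∘ e = (M g).submatrix e e *ᵥ vconj (s g) (v ∘ e)
      rw [submatrix_mulVec_equiv, vconj_comp, Function.comp_assoc,
        Equiv.self_comp_symm, Function.comp_id]

variable [DecidableEq α] [DecidableEq β]

lemma submatrix_mem_unitaryGroup {S : Matrix α α ℂ} (hS : S ∈ unitaryGroup α ℂ) (e : β ≃ α) :
    S.submatrix e e ∈ unitaryGroup β ℂ := by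
  rw [mem_unitaryGroup_iff] at hS ⊢
  rw [star_eq_conjTranspose, conjTranspose_submatrix, ← star_eq_conjTranspose,
    submatrix_mul_equiv, hS, submatrix_one_equiv]

lemma IsUnitaryCoRep.submatrix {M : G → Matrix α α ℂ} (hM : IsUnitaryCoRep s M ω) (e : β ≃ α) :
    IsUnitaryCoRep s (fun g => (M g).submatrix e e) ω :=
  .of_unitary hM.omega_norm
    (fun g1 g2 => by
      rw [mconj_submatrix, submatrix_mul_equiv, hM.mul_eq]
      rfl)
    fun g => submatrix_mem_unitaryGroup (hM.unitary g) e

lemma coRepEquiv_unitaryConj_submatrix (M : G → Matrix α α ℂ) {S : Matrix β β ℂ}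
    (hS : S ∈ unitaryGroup β ℂ) (e : α ≃ β) :
    CoRepEquiv s M (unitaryConj s S fun g => (M g).submatrix e.symm e.symm) :=
  ⟨e, S, hS, fun g => by rw [inv_eq_left_inv (star_mconj_mul_self _ hS)]; rfl⟩

lemma IrreducibleCoRep.unitaryConj {M : G → Matrix α α ℂ} (hirr : IrreducibleCoRep s M)
    {S : Matrix α α ℂ} (hS : S ∈ unitaryGroup α ℂ) :
    IrreducibleCoRep s (_root_.unitaryConj s S M) := by
  refine hirr.of_surjective (mulVecLin S) (fun w => ⟨star S *ᵥ w, ?_⟩) fun g v => ?_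
  · rw [mulVecLin_apply, mulVec_mulVec, mem_unitaryGroup_iff.mp hS, one_mulVec]
  · simp only [rho, mulVecLin_apply, vconj_mulVec, _root_.unitaryConj, mulVec_mulVec]
    rw [mul_assoc (S * M g), star_mconj_mul_self _ hS, mul_one]

end Transport

lemma intertwines_mul_nonsing_inv {R ι : Type*} [CommRing R] [Fintype ι] [DecidableEq ι]
    {D1 D2 E A C : Matrix ι ι R} (hA : IsUnit A) (h1 : D1 * A = A * E) (h2 : D2 * C = C * E) :
    D2 * (C * A⁻¹) = C * A⁻¹ * D1 := by
  have hdet := (isUnit_iff_isUnit_det A).mp hA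
  calc D2 * (C * A⁻¹) = C * (A⁻¹ * A) * E * A⁻¹ := by
        rw [nonsing_inv_mul _ hdet, mul_one, ← mul_assoc, h2]
    _ = C * A⁻¹ * (D1 * A) * A⁻¹ := by rw [h1]; simp only [mul_assoc]
    _ = C * A⁻¹ * D1 := by rw [mul_assoc, mul_assoc D1, mul_nonsing_inv _ hdet, mul_one]

section Schur

variable {G : Type*} [Group G] {s : G →* ℤˣ} {ι : Type*} [Fintype ι] [DecidableEq ι]

lemma isUnit_of_intertwines {D E : G → Matrix ι ι ℂ} (hirr : IrreducibleOnH s D)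
    {X : Matrix ι ι ℂ} (hX : ∀ h, s h = 1 → D h * X = X * E h) (hX0 : X ≠ 0) : IsUnit X := by
  have hinv : ∀ h, s h = 1 → ∀ v ∈ LinearMap.range (toLin' X),
      D h *ᵥ v ∈ LinearMap.range (toLin' X) := by
    rintro h hh _ ⟨w, rfl⟩
    exact ⟨E h *ᵥ w, by simp only [toLin'_apply, mulVec_mulVec, hX h hh]⟩
  rcases hirr _ hinv with hbot | htop
  · exact absurd (toLin'.map_eq_zero_iff.mp (LinearMap.range_eq_bot.mp hbot)) hX0
  · exact mulVec_surjective_iff_isUnit.mp (LinearMap.range_eq_top.mp htop)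

lemma eq_smul_one_of_commutes {D : G → Matrix ι ι ℂ} (hirr : IrreducibleOnH s D)
    {X : Matrix ι ι ℂ} (hX : ∀ h, s h = 1 → D h * X = X * D h) : ∃ c : ℂ, X = c • 1 := by
  cases isEmpty_or_nonempty ι
  · exact ⟨0, Subsingleton.elim _ _⟩
  obtain ⟨c, hc⟩ := Module.End.exists_eigenvalue (toLin' X)
  have hinv : ∀ h, s h = 1 → ∀ v ∈ Module.End.eigenspace (toLin' X) c,
      D h *ᵥ v ∈ Module.End.eigenspace (toLin' X) c := by
    intro h hh v hv
    rw [Module.End.mem_eigenspace_iff, toLin'_apply] at hv ⊢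
    rw [mulVec_mulVec, ← hX h hh, ← mulVec_mulVec, hv, mulVec_smul]
  rcases hirr _ hinv with hbot | htop
  · exact absurd hbot hc
  · refine ⟨c, toLin'.injective (LinearMap.ext fun v => ?_)⟩
    have hv : v ∈ Module.End.eigenspace (toLin' X) c := htop ▸ Submodule.mem_top
    rw [Module.End.mem_eigenspace_iff] at hv
    rw [hv, map_smul, toLin'_one]
    rfl

lemma star_intertwines {D1 D2 : G → Matrix ι ι ℂ} (hD1 : ∀ h, s h = 1 → D1 h ∈ unitaryGroup ι ℂ)
    (hD2 : ∀ h, s h = 1 → D2 h ∈ unitaryGroup ι ℂ) {X : Matrix ι ι ℂ}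
    (hX : ∀ h, s h = 1 → D2 h * X = X * D1 h) {h : G} (hh : s h = 1) :
    D1 h * star X = star X * D2 h := by
  have hstar : star X * star (D2 h) = star (D1 h) * star X := by
    simpa only [star_mul] using congrArg star (hX h hh)
  calc D1 h * star X = D1 h * (star X * star (D2 h)) * D2 h := by
        rw [mul_assoc, mul_assoc, mem_unitaryGroup_iff'.mp (hD2 h hh), mul_one]
    _ = star X * D2 h := by
        rw [hstar, ← mul_assoc, mem_unitaryGroup_iff.mp (hD1 h hh), one_mul]

lemma exists_smul_mem_unitaryGroup {X : Matrix ι ι ℂ} (hX : IsUnit X) {c : ℂ}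
    (hc : star X * X = c • 1) : ∃ a : ℂ, a • X ∈ unitaryGroup ι ℂ := by
  cases isEmpty_or_nonempty ι with
  | inl _ => exact ⟨1, by rw [Subsingleton.elim (1 • X) 1]; exact one_mem _⟩
  | inr _ =>
    inhabit ι
    have hc0 : 0 ≤ c := by
      simpa [← star_eq_conjTranspose, hc] using
        (posSemidef_conjTranspose_mul_self X).diag_nonneg (i := default)
    have hcne : c ≠ 0 := by
      rintro rfl
      rw [zero_smul, star_eq_conjTranspose, conjTranspose_mul_self_eq_zero] at hc
      exact not_isUnit_zero (hc ▸ hX)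
    obtain ⟨r, rfl⟩ : ∃ r : ℝ, c = r :=
      ⟨c.re, Complex.eq_re_of_ofReal_le (by rw [Complex.ofReal_zero]; exact hc0)⟩
    have hr : 0 < r := lt_of_le_of_ne (Complex.zero_le_real.mp hc0)
      (fun h => hcne (by rw [← h, Complex.ofReal_zero]))
    refine ⟨((Real.sqrt r)⁻¹ : ℝ), ?_⟩
    rw [mem_unitaryGroup_iff', star_smul, Matrix.smul_mul, Matrix.mul_smul, hc, smul_smul,
      smul_smul, Complex.star_def, Complex.conj_ofReal, ← Complex.ofReal_mul,
      ← Complex.ofReal_mul, ← mul_inv, Real.mul_self_sqrt hr.le, inv_mul_cancel₀ hr.ne',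
      Complex.ofReal_one, one_smul]

lemma unitEquivOnH_of_isUnit_intertwines {D1 D2 : G → Matrix ι ι ℂ}
    (hirr : IrreducibleOnH s D1) (hD1 : ∀ h, s h = 1 → D1 h ∈ unitaryGroup ι ℂ)
    (hD2 : ∀ h, s h = 1 → D2 h ∈ unitaryGroup ι ℂ) {X : Matrix ι ι ℂ} (hXu : IsUnit X)
    (hX : ∀ h, s h = 1 → D2 h * X = X * D1 h) : UnitEquivOnH s D1 D2 := by
  obtain ⟨c, hc⟩ := eq_smul_one_of_commutes hirr (X := star X * X) fun h hh => by
    rw [← mul_assoc, star_intertwines hD1 hD2 hX hh, mul_assoc, hX h hh, mul_assoc]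
  obtain ⟨a, ha⟩ := exists_smul_mem_unitaryGroup hXu hc
  refine ⟨a • X, ha, fun h hh => ?_⟩
  calc D2 h = D2 h * (a • X) * star (a • X) := by
        rw [mul_assoc, mem_unitaryGroup_iff.mp ha, mul_one]
    _ = a • X * D1 h * star (a • X) := by
        rw [Matrix.mul_smul, hX h hh]
        simp only [Matrix.smul_mul]

end Schur

section AntiUnitary

variable {G : Type*} [Group G] {s : G →* ℤˣ} {ω : G → G → ℂ} {T0 : G}
  {ι : Type*} [Fintype ι] [DecidableEq ι] {M : G → Matrix ι ι ℂ}

lemma invariantSub_of_unitary_of_T0 (hM : IsCoRep s M ω) (hT0 : s T0 = -1)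
    {W : Submodule ℂ (ι → ℂ)} (hH : ∀ h, s h = 1 → ∀ v ∈ W, rho s M h v ∈ W)
    (hT : ∀ v ∈ W, rho s M T0 v ∈ W) : InvariantSub s M W := by
  intro g v hv
  rcases Int.units_eq_one_or (s g) with hg | hg
  · exact hH g hg v hv
  · have hk : s (g * T0⁻¹) = 1 := by rw [map_mul, map_inv, hg, hT0]; decide
    have hmul := hM.rho_mul (g * T0⁻¹) T0 v
    rw [inv_mul_cancel_right] at hmul
    rw [← inv_smul_smul₀ (hM.omega_ne_zero (g * T0⁻¹) T0) (rho s M g v), ← hmul]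
    exact W.smul_mem _ (hH _ hk _ (hT v hv))

lemma IsCoRep.mul_T0 (hM : IsCoRep s M ω) (hT0 : s T0 = -1) {h : G} (hh : s h = 1) :
    M h * M T0 = M T0 * ((ω h T0 / ω T0 (T0⁻¹ * h * T0)) •
      (M (T0⁻¹ * h * T0)).map (starRingEnd ℂ)) := by
  have e1 := hM.mul_eq h T0
  have e2 := hM.mul_eq T0 (T0⁻¹ * h * T0)
  rw [hh, mconj_one] at e1
  rw [hT0, mconj_neg_one, ← mul_assoc, mul_inv_cancel_left] at e2
  rw [Matrix.mul_smul, e2, e1, smul_smul, div_mul_cancel₀ _ (hM.omega_ne_zero _ _)]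

end AntiUnitary

lemma Estd_map_conj {G : Type*} [Group G] {ι : Type*} (ω : G → G → ℂ) (T0 : G)
    (D : G → Matrix ι ι ℂ) (h : G) :
    (Estd ω T0 D h).map (starRingEnd ℂ)
      = (ω h T0 / ω T0 (T0⁻¹ * h * T0)) • (D (T0⁻¹ * h * T0)).map (starRingEnd ℂ) := by
  ext
  simp [Estd]

section Blocks

variable {G : Type*} [Group G] {s : G →* ℤˣ} {ω : G → G → ℂ} {T0 : G}
  {α β : Type*} [Fintype α] [Fintype β]

lemma rho_fromBlocks_comp_inr {M : G → Matrix (α ⊕ β) (α ⊕ β) ℂ} {g : G} {P : Matrix α α ℂ}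
    {Q : Matrix β β ℂ} (hg : M g = fromBlocks P 0 0 Q) {v : α ⊕ β → ℂ}
    (hv : v ∘ Sum.inr = 0) : rho s M g v ∘ Sum.inr = 0 := by
  rw [rho, hg, fromBlocks_mulVec, Sum.elim_comp_inr, ← vconj_comp _ v Sum.inr, hv]
  simp [vconj]

variable [DecidableEq α] [DecidableEq β]

lemma fromBlocks_unitary_relations {A : Matrix α α ℂ} {B : Matrix α β ℂ} {C : Matrix β α ℂ}
    {D : Matrix β β ℂ} (hT : fromBlocks A B C D ∈ unitaryGroup (α ⊕ β) ℂ) :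
    Aᴴ * A + Cᴴ * C = 1 ∧ Aᴴ * B + Cᴴ * D = 0 ∧ A * Aᴴ + B * Bᴴ = 1 := by
  have h1 := mem_unitaryGroup_iff'.mp hT
  have h2 := mem_unitaryGroup_iff.mp hT
  rw [star_eq_conjTranspose, fromBlocks_conjTranspose, fromBlocks_multiply, ← fromBlocks_one,
    fromBlocks_inj] at h1 h2
  exact ⟨h1.1, h1.2.1, h2.1⟩

lemma not_irreducibleCoRep_of_fromBlocks [Nonempty α] [Nonempty β]
    {M : G → Matrix (α ⊕ β) (α ⊕ β) ℂ} (hM : IsCoRep s M ω) (hT0 : s T0 = -1)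
    (hH : ∀ h, s h = 1 → ∃ P Q, M h = fromBlocks P 0 0 Q)
    (hT : ∃ P Q, M T0 = fromBlocks P 0 0 Q) : ¬ IrreducibleCoRep s M := by
  intro hirr
  let W := LinearMap.ker (LinearMap.funLeft ℂ ℂ (Sum.inr : β → α ⊕ β))
  have hW : InvariantSub s M W := by
    refine invariantSub_of_unitary_of_T0 hM hT0 (fun h hh v hv => ?_) fun v hv => ?_
    · obtain ⟨P, Q, hPQ⟩ := hH h hh
      exact rho_fromBlocks_comp_inr hPQ hv
    · obtain ⟨P, Q, hPQ⟩ := hT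
      exact rho_fromBlocks_comp_inr hPQ hv
  rcases hirr W hW with hbot | htop
  · have hmem : (Sum.elim 1 0 : α ⊕ β → ℂ) ∈ W := LinearMap.mem_ker.mpr rfl
    rw [hbot, Submodule.mem_bot] at hmem
    simpa using congrFun hmem (Sum.inl (Classical.arbitrary α))
  · have hmem : (Sum.elim 0 1 : α ⊕ β → ℂ) ∈ W := htop ▸ Submodule.mem_top
    simpa [W] using congrFun hmem (Classical.arbitrary β)

end Blocks

section TypeIII

variable {G : Type*} [Group G] {s : G →* ℤˣ} {ω : G → G → ℂ} {T0 : G}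
  {α : Type*} [Fintype α] [DecidableEq α] {N : G → Matrix (α ⊕ α) (α ⊕ α) ℂ}
  {D1 D2 : G → Matrix α α ℂ} {U : G → Matrix (α ⊕ α) (α ⊕ α) ℂ}

lemma IsCoRep.intertwines_blocks_T0 (hN : IsCoRep s N ω) (hT0 : s T0 = -1)
    (hblk : ∀ h, s h = 1 → N h = fromBlocks (D1 h) 0 0 (D2 h)) {A B C D : Matrix α α ℂ}
    (hT : N T0 = fromBlocks A B C D) {h : G} (hh : s h = 1) :
    D1 h * A = A * (Estd ω T0 D1 h).map (starRingEnd ℂ) ∧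
      D2 h * C = C * (Estd ω T0 D1 h).map (starRingEnd ℂ) := by
  have hk : s (T0⁻¹ * h * T0) = 1 := by rw [map_mul, map_mul, map_inv, hh, hT0]; decide
  have key := hN.mul_T0 hT0 hh
  rw [hblk h hh, hblk _ hk, hT, fromBlocks_map, fromBlocks_smul, ← Estd_map_conj,
    fromBlocks_multiply, fromBlocks_multiply, fromBlocks_inj] at key
  simp only [Matrix.map_zero _ (map_zero _), smul_zero, Matrix.zero_mul, Matrix.mul_zero,
    add_zero, zero_add] at key
  exact ⟨key.1, key.2.2.1⟩

lemma block₁₁_T0_eq_zero (hN : IsUnitaryCoRep s N ω) (hirr : IrreducibleCoRep s N)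
    (hT0 : s T0 = -1) (hblk : ∀ h, s h = 1 → N h = fromBlocks (D1 h) 0 0 (D2 h))
    (hD1 : ∀ h, s h = 1 → D1 h ∈ unitaryGroup α ℂ) (hD2 : ∀ h, s h = 1 → D2 h ∈ unitaryGroup α ℂ)
    (hirr1 : IrreducibleOnH s D1) (hirr2 : IrreducibleOnH s D2) (hneq : ¬ UnitEquivOnH s D1 D2)
    {A B C D : Matrix α α ℂ} (hT : N T0 = fromBlocks A B C D) : A = 0 := by
  by_contra hA
  have : Nonempty α := by
    by_contra hα
    have := not_nonempty_iff.mp hα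
    exact hA (Subsingleton.elim _ _)
  have hrel := fun h (hh : s h = 1) => hN.intertwines_blocks_T0 hT0 hblk hT hh
  have hAu : IsUnit A := isUnit_of_intertwines hirr1 (fun h hh => (hrel h hh).1) hA
  obtain ⟨hAC, -, hAB⟩ := fromBlocks_unitary_relations (hT ▸ hN.unitary T0)
  by_cases hC : C = 0
  · have hAA : A * Aᴴ = 1 := mul_eq_one_comm.mp (by simpa [hC] using hAC)
    have hB : B = 0 := self_mul_conjTranspose_eq_zero.mp (by simpa [hAA] using hAB)
    exact not_irreducibleCoRep_of_fromBlocks hN.toIsCoRep hT0 (fun h hh => ⟨_, _, hblk h hh⟩)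
      ⟨A, D, by rw [hT, hB, hC]⟩ hirr
  · have hCu : IsUnit C := isUnit_of_intertwines hirr2 (fun h hh => (hrel h hh).2) hC
    exact hneq <| unitEquivOnH_of_isUnit_intertwines hirr1 hD1 hD2
      (hCu.mul (isUnit_nonsing_inv_iff.mpr hAu))
      fun h hh => intertwines_mul_nonsing_inv hAu (hrel h hh).1 (hrel h hh).2

lemma IsCoRep.block₁₂_T0_eq (hU : IsCoRep s U ω) (hT0 : s T0 = -1) {B X Y : Matrix α α ℂ}
    (hT : U T0 = fromBlocks 0 B 1 0) (hT2 : U (T0 * T0) = fromBlocks X 0 0 Y) :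
    B = ω T0 T0 • X := by
  have key := hU.mul_eq T0 T0
  rw [hT0, mconj_neg_one, hT, hT2, fromBlocks_map, fromBlocks_multiply, fromBlocks_smul,
    fromBlocks_inj] at key
  simpa using key.1

lemma exists_unitaryConj_standardForm (hN : IsUnitaryCoRep s N ω) (hT0 : s T0 = -1)
    (hblk : ∀ h, s h = 1 → N h = fromBlocks (D1 h) 0 0 (D2 h)) {B C D : Matrix α α ℂ}
    (hT : N T0 = fromBlocks 0 B C D) :
    ∃ V ∈ unitaryGroup (α ⊕ α) ℂ,
      (∀ h, s h = 1 → unitaryConj s V N h =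
        fromBlocks (D1 h) 0 0 ((Estd ω T0 D1 h).map (starRingEnd ℂ))) ∧
      unitaryConj s V N T0 = fromBlocks 0 (ω T0 T0 • D1 (T0 * T0)) 1 0 := by
  obtain ⟨hCC, hCD, -⟩ := fromBlocks_unitary_relations (hT ▸ hN.unitary T0)
  simp only [conjTranspose_zero, Matrix.zero_mul, zero_add] at hCC hCD
  have hD : D = 0 := by
    rw [← Matrix.one_mul D, ← mul_eq_one_comm.mp hCC, Matrix.mul_assoc, hCD, Matrix.mul_zero]
  let V : Matrix (α ⊕ α) (α ⊕ α) ℂ := fromBlocks 1 0 0 Cᴴ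
  have hVstar : star V = fromBlocks 1 0 0 C := by
    simp [V, star_eq_conjTranspose, fromBlocks_conjTranspose]
  have hV : V ∈ unitaryGroup (α ⊕ α) ℂ := by
    rw [mem_unitaryGroup_iff, hVstar, fromBlocks_multiply]
    simp [hCC]
  have hUh : ∀ h, s h = 1 → unitaryConj s V N h =
      fromBlocks (D1 h) 0 0 ((Estd ω T0 D1 h).map (starRingEnd ℂ)) := by
    intro h hh
    have hE : Cᴴ * D2 h * C = (Estd ω T0 D1 h).map (starRingEnd ℂ) := by
      rw [Matrix.mul_assoc, (hN.intertwines_blocks_T0 hT0 hblk hT hh).2, ← Matrix.mul_assoc, hCC,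
        Matrix.one_mul]
    rw [unitaryConj_of_eq_one _ hh, hblk h hh, hVstar, fromBlocks_multiply, fromBlocks_multiply]
    simp [hE]
  have hUT0 : unitaryConj s V N T0 = fromBlocks 0 (B * C.map (starRingEnd ℂ)) 1 0 := by
    rw [unitaryConj, hT0, ← mconj_star, hVstar, mconj_neg_one, fromBlocks_map, hT, hD,
      fromBlocks_multiply, fromBlocks_multiply]
    simp [hCC]
  have hT0sq : s (T0 * T0) = 1 := by rw [map_mul, hT0]; decide
  refine ⟨V, hV, hUh, ?_⟩
  rw [hUT0, (hN.unitaryConj hV).toIsCoRep.block₁₂_T0_eq hT0 hUT0 (hUh _ hT0sq)]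

end TypeIII

theorem typeIII_standard_form_general {G : Type*} [Group G]
    (s : G →* ℤˣ)
    (T0 : G) (hT0 : s T0 = -1)
    {n : ℕ}
    (M : G → Matrix (Fin n) (Fin n) ℂ) (ω : G → G → ℂ)
    (hM : IsUnitaryCoRep s M ω) (hirr : IrreducibleCoRep s M)
    (hrestr : ∃ (m' : ℕ) (e : Fin n ≃ (Fin m' ⊕ Fin m'))
      (S : Matrix (Fin n) (Fin n) ℂ) (D1 D2 : G → Matrix (Fin m') (Fin m') ℂ),
      S ∈ Matrix.unitaryGroup (Fin n) ℂ ∧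
      (∀ h, s h = 1 →
        S * M h * star S = (Matrix.fromBlocks (D1 h) 0 0 (D2 h)).submatrix e e) ∧
      IsProjRepOnH s D1 ω ∧ IsProjRepOnH s D2 ω ∧
      IrreducibleOnH s D1 ∧ IrreducibleOnH s D2 ∧
      ¬ UnitEquivOnH s D1 D2) :
    ∃ (m : ℕ) (D : G → Matrix (Fin m) (Fin m) ℂ),
      IsProjRepOnH s D ω ∧ IrreducibleOnH s D ∧
      ∃ U : G → Matrix (Fin m ⊕ Fin m) (Fin m ⊕ Fin m) ℂ,
        IsUnitaryCoRep s U ω ∧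
        CoRepEquiv s M U ∧
        (∀ h, s h = 1 → U h = Matrix.fromBlocks (D h) 0 0
          ((Estd ω T0 D h).map (starRingEnd ℂ))) ∧
        U T0 = Matrix.fromBlocks 0 (ω T0 T0 • D (T0 * T0)) 1 0 := by
  obtain ⟨m, e, S, D1, D2, hS, hSblk, hD1, hD2, hirr1, hirr2, hneq⟩ := hrestr
  have hS₀ : S.submatrix e.symm e.symm ∈ unitaryGroup (Fin m ⊕ Fin m) ℂ :=
    submatrix_mem_unitaryGroup hS e.symm
  let N := unitaryConj s (S.submatrix e.symm e.symm) fun g => (M g).submatrix e.symm e.symm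
  have hN : IsUnitaryCoRep s N ω := (hM.submatrix e.symm).unitaryConj hS₀
  have hblk : ∀ h, s h = 1 → N h = fromBlocks (D1 h) 0 0 (D2 h) := fun h hh =>
    (unitaryConj_submatrix_of_eq_one S e.symm hh).trans <| by
      rw [hSblk h hh, submatrix_submatrix, Equiv.self_comp_symm, submatrix_id_id]
  obtain ⟨A, B, C, D, hT⟩ : ∃ A B C D, N T0 = fromBlocks A B C D :=
    ⟨_, _, _, _, (fromBlocks_toBlocks _).symm⟩
  obtain rfl : A = 0 := block₁₁_T0_eq_zero hN ((hirr.submatrix e.symm).unitaryConj hS₀) hT0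
    hblk hD1.1 hD2.1 hirr1 hirr2 hneq hT
  obtain ⟨V, hV, hUh, hUT0⟩ := exists_unitaryConj_standardForm hN hT0 hblk hT
  refine ⟨m, D1, hD1, hirr1, unitaryConj s V N, hN.unitaryConj hV, ?_, hUh, hUT0⟩
  rw [← unitaryConj_mul]
  exact coRepEquiv_unitaryConj_submatrix M (mul_mem hV hS₀) e

/-- standard (canonical) form of a type-III (complex, norm `R = 2`)
irreducible unitary projective co-representation: it is equivalent to `U` with
`U(h) = diag(D(h), conj(E(h)))` for `h ∈ H` and `U(T0) = [[0, ω(T0,T0)·D(T0²)],[I,0]]`. -/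
theorem typeIII_standard_form {G : Type*} [Group G] [Fintype G] [DecidableEq G]
    (s : G →* ℤˣ) (hs : Function.Surjective s)
    (T0 : G) (hT0 : s T0 = -1)
    {n : ℕ}
    (M : G → Matrix (Fin n) (Fin n) ℂ) (ω : G → G → ℂ)
    (hM : IsUnitaryCoRep s M ω) (hirr : IrreducibleCoRep s M)
    (hone : ω 1 1 = 1)
    (hrestr : ∃ (m' : ℕ) (e : Fin n ≃ (Fin m' ⊕ Fin m'))
      (S : Matrix (Fin n) (Fin n) ℂ) (D1 D2 : G → Matrix (Fin m') (Fin m') ℂ),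
      S ∈ Matrix.unitaryGroup (Fin n) ℂ ∧
      (∀ h, s h = 1 →
        S * M h * star S = (Matrix.fromBlocks (D1 h) 0 0 (D2 h)).submatrix e e) ∧
      IsProjRepOnH s D1 ω ∧ IsProjRepOnH s D2 ω ∧
      IrreducibleOnH s D1 ∧ IrreducibleOnH s D2 ∧
      ¬ UnitEquivOnH s D1 D2) :
    ∃ (m : ℕ) (D : G → Matrix (Fin m) (Fin m) ℂ),
      IsProjRepOnH s D ω ∧ IrreducibleOnH s D ∧
      ∃ U : G → Matrix (Fin m ⊕ Fin m) (Fin m ⊕ Fin m) ℂ,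
        IsUnitaryCoRep s U ω ∧
        CoRepEquiv s M U ∧
        (∀ h, s h = 1 → U h = Matrix.fromBlocks (D h) 0 0
          ((Estd ω T0 D h).map (starRingEnd ℂ))) ∧
        U T0 = Matrix.fromBlocks 0 (ω T0 T0 • D (T0 * T0)) 1 0 :=
  typeIII_standard_form_general s T0 hT0 M ω hM hirr hrestr

end
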